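/- Let A be an n×n Hermitian positive definite complex matrix whose minimum eigenvalue λ_1 and maximum eigenvalue λ_n satisfy 0 < λ_1 < λ_n, let κ := λ_n/λ_1, and let T ≥ 2 be an integer. Let γ_t^{ch} (t = 0,…,T−1) be the Chebyshev steps of length T on [λ_1, λ_n]. Then the spectral radius of the matrix ∏_{t=0}^{T−1}(I_n − γ_t^{ch} A) is strictly less than ((κ−1)/(κ+1))^T. -/

import Mathlib

/-- The Chebyshev steps of length `T` on `[a, b]`. -/
noncomputable def chebStep (a b : ℝ) (T t : ℕ) : ℝ :=
  ((a + b) / 2 + ((b - a) / 2) * Real.cos ((2 * t + 1) * Real.pi / (2 * T)))⁻¹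

/-- The spectral radius of a square complex matrix: the maximum modulus of its
eigenvalues (elements of its spectrum). -/
noncomputable def specRad {n : ℕ} (M : Matrix (Fin n) (Fin n) ℂ) : ℝ :=
  sSup ((fun z => ‖z‖) '' spectrum ℂ M)

section AuxCheb
open Polynomial Polynomial.Chebyshev Real

lemma deg_step {p q : ℝ[X]} {d : ℕ} (hp : p.natDegree = d + 1) (hc : p.leadingCoeff = 2 ^ d)
    (hq : q.natDegree ≤ d + 1) :
    (2 * X * p - q).natDegree = d + 2 ∧ (2 * X * p - q).leadingCoeff = 2 ^ (d + 1) := by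
  have hp0 : p ≠ 0 := fun h => by simp [h] at hp
  have h2X : (2 * X : ℝ[X]).natDegree = 1 := by compute_degree!
  have h2Xc : (2 * X : ℝ[X]).leadingCoeff = 2 := by
    rw [leadingCoeff, h2X]; compute_degree!
  have h2X0 : (2 * X : ℝ[X]) ≠ 0 := fun h => by simp [h] at h2X
  have hA : (2 * X * p).natDegree = d + 2 := by
    rw [natDegree_mul h2X0 hp0, h2X, hp]; ring
  have hqlt : q.natDegree < (2 * X * p).natDegree := by omega
  refine ⟨by rw [natDegree_sub_eq_left_of_natDegree_lt hqlt, hA], ?_⟩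
  rw [leadingCoeff_sub_of_degree_lt (degree_lt_degree hqlt), leadingCoeff_mul, h2Xc, hc]
  ring

lemma chebT_deg : ∀ m : ℕ,
    ((T ℝ ((m : ℤ) + 1)).natDegree = m + 1 ∧ (T ℝ ((m : ℤ) + 1)).leadingCoeff = 2 ^ m) := by
  have key : ∀ m : ℕ,
      (((T ℝ ((m : ℤ) + 1)).natDegree = m + 1 ∧ (T ℝ ((m : ℤ) + 1)).leadingCoeff = 2 ^ m) ∧
       ((T ℝ ((m : ℤ) + 2)).natDegree = m + 2 ∧ (T ℝ ((m : ℤ) + 2)).leadingCoeff = 2 ^ (m+1))) := by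
    intro m
    induction m with
    | zero =>
      constructor
      · constructor <;> simp [T_one, leadingCoeff_X]
      · rw [show ((0:ℕ) : ℤ) + 2 = 2 from rfl, T_two]
        constructor
        · compute_degree!
        · have hd : (2 * X ^ 2 - 1 : ℝ[X]).natDegree = 2 := by compute_degree!
          rw [leadingCoeff, hd]
          compute_degree!
    | succ k ih =>
      refine ⟨by exact_mod_cast ih.2, ?_⟩
      have h3 : T ℝ ((k : ℤ) + 1 + 2) = 2 * X * T ℝ ((k : ℤ) + 2) - T ℝ ((k : ℤ) + 1) := by
        have := T_add_two ℝ ((k : ℤ) + 1)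
        rw [show (k : ℤ) + 1 + 1 = (k : ℤ) + 2 by ring] at this
        exact this
      have : ((k + 1 : ℕ) : ℤ) + 2 = (k : ℤ) + 1 + 2 := by push_cast; ring
      rw [this, h3]
      have := deg_step ih.2.1 ih.2.2 (le_of_eq ih.1.1 |>.trans (by omega))
      rw [show k + 1 + 2 = k + 2 + 1 by ring, show k + 1 + 1 = k + 2 by ring]
      exact this
  intro m; exact (key m).1

noncomputable def chebNode (N t : ℕ) : ℝ := Real.cos ((2 * t + 1) * Real.pi / (2 * N))

lemma chebNode_mem {N : ℕ} (hN : 1 ≤ N) (u : ℕ) (hu : u < N) :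
    (2 * u + 1) * π / (2 * N) ∈ Set.Ioo 0 π := by
  have hNpos : (0:ℝ) < N := by exact_mod_cast hN
  constructor
  · positivity
  · rw [div_lt_iff₀ (by positivity)]
    have : (2 * u + 1 : ℝ) < 2 * N := by exact_mod_cast (by omega : 2 * u + 1 < 2 * N)
    nlinarith [pi_pos]

lemma chebNode_inj {N : ℕ} (hN : 1 ≤ N) : Function.Injective (fun i : Fin N => chebNode N i) := by
  intro s t h
  simp only [chebNode] at h
  have hNpos : (0:ℝ) < N := by exact_mod_cast hN
  have := Real.injOn_cos (Set.mem_Icc_of_Ioo (chebNode_mem hN s s.2))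
    (Set.mem_Icc_of_Ioo (chebNode_mem hN t t.2)) h
  field_simp at this
  exact Fin.ext (by exact_mod_cast (by linarith : ((s:ℕ):ℝ) = (t:ℕ)))

lemma chebT_factor (N : ℕ) (hN : 1 ≤ N) :
    T ℝ (N : ℤ) = C ((2:ℝ)^(N-1)) * ∏ t ∈ Finset.range N, (X - C (chebNode N t)) := by
  obtain ⟨m, rfl⟩ : ∃ m, N = m + 1 := ⟨N - 1, by omega⟩
  set N := m + 1
  set P : ℝ[X] := ∏ t ∈ Finset.range N, (X - C (chebNode N t)) with hP
  have hPm : P.Monic := monic_prod_of_monic _ _ fun t _ => monic_X_sub_C _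
  have hPd : P.natDegree = N := by
    rw [hP, natDegree_prod _ _ fun t _ => X_sub_C_ne_zero _]
    simp
  have hTd := chebT_deg m
  have hC0 : ((2:ℝ)^(N-1)) ≠ 0 := by positivity
  set D : ℝ[X] := T ℝ (N : ℤ) - C ((2:ℝ)^(N-1)) * P with hD
  have hcast : ((N : ℕ) : ℤ) = (m : ℤ) + 1 := by exact Nat.cast_succ m
  have hTd1 : (T ℝ (N:ℤ)).natDegree = N := by rw [hcast]; exact hTd.1
  have hTc : (T ℝ (N:ℤ)).leadingCoeff = 2 ^ (N-1) := by
    rw [hcast, hTd.2]; simp [N]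
  have hQd : (C ((2:ℝ)^(N-1)) * P).natDegree = N := by
    rw [natDegree_C_mul hC0, hPd]
  have hQc : (C ((2:ℝ)^(N-1)) * P).leadingCoeff = 2 ^ (N-1) := by
    rw [leadingCoeff_mul, leadingCoeff_C, hPm.leadingCoeff, mul_one]
  have hDdeg : D.natDegree < N ∨ D = 0 := by
    by_cases h0 : D = 0
    · exact Or.inr h0
    · left
      have hle : D.natDegree ≤ N := le_trans (natDegree_sub_le _ _) (by omega)
      rcases lt_or_eq_of_le hle with h | h
      · exact h
      · exfalso
        have ecoeff : ∀ (p : ℝ[X]) (d : ℕ), p.natDegree = d → p.coeff d = p.leadingCoeff :=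
          fun p d hd => hd ▸ coeff_natDegree
        have e1 : (T ℝ ((N:ℕ):ℤ)).coeff N = 2^(N-1) := (ecoeff _ _ hTd1).trans hTc
        have e2 : (C ((2:ℝ)^(N-1)) * P).coeff N = 2^(N-1) := (ecoeff _ _ hQd).trans hQc
        have hc0 : D.coeff N = 0 := by rw [hD, coeff_sub, e1, e2, sub_self]
        exact leadingCoeff_ne_zero.mpr h0 (((ecoeff _ _ h).symm).trans hc0)
  have heval : ∀ i : Fin N, D.eval (chebNode N i) = 0 := by
    intro i
    have hPz : P.eval (chebNode N i) = 0 := by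
      rw [hP, eval_prod]
      exact Finset.prod_eq_zero (Finset.mem_range.mpr i.2) (by simp)
    have hTz : (T ℝ (N:ℤ)).eval (chebNode N i) = 0 := by
      rw [chebNode, T_real_cos]
      refine Real.cos_eq_zero_iff.mpr ⟨i, ?_⟩
      have hN0 : (N:ℝ) ≠ 0 := by positivity
      push_cast
      field_simp
    simp [hD, hTz, hPz]
  have hDz : D = 0 := by
    rcases hDdeg with h | h
    · exact eq_zero_of_natDegree_lt_card_of_eval_eq_zero D (chebNode_inj hN)
        (fun i => heval i) (by simpa using h)
    · exact h
  have := sub_eq_zero.mp hDz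
  exact this

lemma chebT_gt (N : ℕ) (hN : 2 ≤ N) (u : ℝ) (hu : 1 < u) :
    u ^ N < (T ℝ (N:ℤ)).eval u := by
  set s : ℝ := Real.sqrt (u^2 - 1) with hs
  have hs2 : s^2 = u^2 - 1 := Real.sq_sqrt (by nlinarith)
  have hs0 : 0 < s := Real.sqrt_pos.mpr (by nlinarith)
  set z : ℝ := u + s with hz
  have hz1 : 1 < z := by nlinarith
  have hzpos : 0 < z := by linarith
  have hzinv : z⁻¹ = u - s := by
    rw [inv_eq_of_mul_eq_one_right]; nlinarith
  set t : ℝ := Real.log z with ht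
  have hez : Real.exp t = z := Real.exp_log hzpos
  have hcosh : Real.cosh t = u := by
    rw [Real.cosh_eq, hez, Real.exp_neg, hez, hzinv]; ring
  have hval : (T ℝ (N:ℤ)).eval u = Real.cosh (N * t) := by
    have h1 : (((T ℝ (N:ℤ)).eval u : ℝ) : ℂ) = (T ℂ (N:ℤ)).eval (u : ℂ) :=
      complex_ofReal_eval_T u N
    have h2 : (u : ℂ) = Complex.cos ((t : ℂ) * Complex.I) := by
      rw [Complex.cos_mul_I, ← Complex.ofReal_cosh, hcosh]
    have h3 : (T ℂ (N:ℤ)).eval (Complex.cos ((t : ℂ) * Complex.I)) =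
        Complex.cos ((N:ℤ) * ((t : ℂ) * Complex.I)) := T_complex_cos _ _
    have h4 : ((N:ℤ) : ℂ) * ((t : ℂ) * Complex.I) = ((N * t : ℝ) : ℂ) * Complex.I := by
      push_cast; ring
    have : (((T ℝ (N:ℤ)).eval u : ℝ) : ℂ) = ((Real.cosh (N * t) : ℝ) : ℂ) := by
      rw [h1, h2, h3, h4, Complex.cos_mul_I, Complex.ofReal_cosh]
    exact_mod_cast this
  rw [hval]
  have hzne : z ≠ z⁻¹ := by
    have : z⁻¹ < 1 := by rw [hzinv]; nlinarith
    linarith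
  have hconv := (strictConvexOn_pow hN).2 (Set.mem_Ici.mpr hzpos.le)
    (Set.mem_Ici.mpr (by positivity : (0:ℝ) ≤ z⁻¹)) hzne
    (by norm_num : (0:ℝ) < 1/2) (by norm_num : (0:ℝ) < 1/2) (by norm_num)
  simp only [smul_eq_mul] at hconv
  have hcoshN : Real.cosh (N * t) = (z ^ N + (z⁻¹) ^ N) / 2 := by
    rw [Real.cosh_eq, Real.exp_nat_mul, hez,
      show -((N:ℝ) * t) = (N:ℝ) * (-t) by ring, Real.exp_nat_mul, Real.exp_neg, hez]
  have huz : u = 1/2 * z + 1/2 * z⁻¹ := by rw [hzinv]; ring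
  rw [hcoshN, huz]
  calc (1/2 * z + 1/2 * z⁻¹) ^ N < 1/2 * z ^ N + 1/2 * (z⁻¹) ^ N := hconv
    _ = (z ^ N + (z⁻¹) ^ N) / 2 := by ring

lemma prod_sub_eval (N : ℕ) (hN : 1 ≤ N) (y : ℝ) :
    (2:ℝ)^(N-1) * ∏ t ∈ Finset.range N, (y - chebNode N t) = (T ℝ (N:ℤ)).eval y := by
  conv_rhs => rw [chebT_factor N hN]
  simp [eval_prod]

lemma abs_chebT_le (N : ℕ) (y : ℝ) (hy1 : -1 ≤ y) (hy2 : y ≤ 1) :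
    |(T ℝ (N:ℤ)).eval y| ≤ 1 := by
  rw [← Real.cos_arccos hy1 hy2, T_real_cos]
  exact Real.abs_cos_le_one _

lemma scalar_key (a b : ℝ) (ha : 0 < a) (hab : a < b) (N : ℕ) (hN : 2 ≤ N)
    (x : ℝ) (hx1 : a ≤ x) (hx2 : x ≤ b) :
    |∏ t ∈ Finset.range N, (1 - chebStep a b N t * x)| < ((b - a) / (a + b)) ^ N := by
  have hN1 : 1 ≤ N := by omega
  set c : ℝ := (a + b) / 2 with hc
  set r : ℝ := (b - a) / 2 with hr
  have hrpos : 0 < r := by simp [hr]; linarith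
  have hrc : r < c := by simp [hc, hr]; linarith
  set u : ℝ := c / r with hu
  have hu1 : 1 < u := (one_lt_div hrpos).mpr hrc
  set d : ℕ → ℝ := fun t => c + r * chebNode N t with hd
  have hdpos : ∀ t, 0 < d t := by
    intro t
    have h1 : -1 ≤ chebNode N t := Real.neg_one_le_cos _
    show (0:ℝ) < c + r * chebNode N t
    nlinarith [h1, hrpos, hrc]
  have hstep : ∀ t, chebStep a b N t = (d t)⁻¹ := fun t => rfl
  set y : ℝ := (x - c) / r with hy
  have hy1 : -1 ≤ y := by rw [hy]; rw [le_div_iff₀ hrpos]; simp [hc, hr]; linarith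
  have hy2 : y ≤ 1 := by rw [hy, div_le_one hrpos]; simp [hc, hr]; linarith
  have hry : r * y = x - c := by rw [hy]; field_simp
  set Ty : ℝ := (T ℝ (N:ℤ)).eval y with hTy
  set Tu : ℝ := (T ℝ (N:ℤ)).eval u with hTu
  have hTugt : u ^ N < Tu := chebT_gt N hN u hu1
  have hTupos : 0 < Tu := lt_trans (by positivity) hTugt
  have h2pow : (0:ℝ) < 2 ^ (N-1) := by positivity
  -- numerator
  have hNum : ∏ t ∈ Finset.range N, (d t - x) =
      r ^ N * ((-1) ^ N * Ty / 2 ^ (N-1)) := by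
    have e1 : ∀ t ∈ Finset.range N, d t - x = r * -(y - chebNode N t) := by
      intro t _
      rw [hd]; simp only []
      nlinarith [hry]
    have e2 : ∀ t ∈ Finset.range N, r * -(y - chebNode N t) = (r * -1) * (y - chebNode N t) := by
      intro t _; ring
    rw [Finset.prod_congr rfl e1, Finset.prod_congr rfl e2, Finset.prod_mul_distrib,
      Finset.prod_const, Finset.card_range]
    have e3 : ∏ t ∈ Finset.range N, (y - chebNode N t) = Ty / 2 ^ (N-1) := by
      rw [eq_div_iff (ne_of_gt h2pow), mul_comm]
      exact prod_sub_eval N hN1 y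
    rw [e3, mul_pow]
    ring
  -- denominator
  have hDen : ∏ t ∈ Finset.range N, d t = r ^ N * (Tu / 2 ^ (N-1)) := by
    have refl1 : ∀ t ∈ Finset.range N, d t = r * (u + chebNode N t) := by
      intro t _
      rw [hd]; simp only []
      have : r * u = c := by rw [hu]; field_simp
      nlinarith [this]
    rw [Finset.prod_congr rfl refl1, Finset.prod_mul_distrib, Finset.prod_const,
      Finset.card_range]
    have refl2 : ∏ t ∈ Finset.range N, (u + chebNode N t) =
        ∏ t ∈ Finset.range N, (u - chebNode N t) := by
      rw [← Finset.prod_range_reflect (fun t => u - chebNode N t) N]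
      apply Finset.prod_congr rfl
      intro t htm
      have htN : t < N := Finset.mem_range.mp htm
      congr 1
      rw [chebNode, chebNode]
      have harg : ((2 * (N - 1 - t) + 1 : ℕ) : ℝ) * π / (2 * N) =
          π - ((2 * t + 1 : ℕ) : ℝ) * π / (2 * N) := by
        have hNne : (N:ℝ) ≠ 0 := by positivity
        have : ((2 * (N - 1 - t) + 1 : ℕ) : ℝ) = 2 * N - (2 * t + 1) := by
          have : 2 * (N - 1 - t) + 1 = 2 * N - (2 * t + 1) := by omega
          rw [this]
          push_cast [Nat.cast_sub (by omega : 2 * t + 1 ≤ 2 * N)]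
          ring
        rw [this]
        field_simp
        push_cast
        ring
      push_cast at harg ⊢
      rw [harg, Real.cos_pi_sub]
      ring
    have e3 : ∏ t ∈ Finset.range N, (u - chebNode N t) = Tu / 2 ^ (N-1) := by
      rw [eq_div_iff (ne_of_gt h2pow), mul_comm]
      exact prod_sub_eval N hN1 u
    rw [refl2, e3]
  have hDenpos : 0 < ∏ t ∈ Finset.range N, d t := Finset.prod_pos fun t _ => hdpos t
  -- combine
  have hsplit : ∏ t ∈ Finset.range N, (1 - chebStep a b N t * x) =
      (∏ t ∈ Finset.range N, (d t - x)) / ∏ t ∈ Finset.range N, d t := by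
    rw [← Finset.prod_div_distrib]
    apply Finset.prod_congr rfl
    intro t _
    rw [hstep t]
    have hne := (hdpos t).ne'
    field_simp
  rw [hsplit, abs_div, abs_of_pos hDenpos, hNum, hDen]
  have hTyle : |Ty| ≤ 1 := abs_chebT_le N y hy1 hy2
  have hfinal : |r ^ N * ((-1) ^ N * Ty / 2 ^ (N-1))| = r ^ N * |Ty| / 2 ^ (N-1) := by
    rw [abs_mul, abs_div, abs_mul, abs_pow, abs_pow, abs_neg, abs_one, one_pow, one_mul,
      abs_of_pos hrpos, abs_of_pos h2pow]
    ring
  rw [hfinal]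
  have hba : (b - a) / (a + b) = r / c := by
    rw [hr, hc]; field_simp
  rw [hba]
  have hrc' : r / c = u⁻¹ := by rw [hu]; field_simp
  rw [hrc', inv_pow]
  have hgoal : r ^ N * |Ty| / 2 ^ (N - 1) / (r ^ N * (Tu / 2 ^ (N - 1))) = |Ty| / Tu := by
    field_simp
  rw [hgoal, div_lt_iff₀ hTupos]
  have hup : (0:ℝ) < u ^ N := by positivity
  have h1lt : (1:ℝ) < (u ^ N)⁻¹ * Tu := by
    have := (mul_lt_mul_iff_right₀ (inv_pos.mpr hup)).mpr hTugt
    rwa [inv_mul_cancel₀ (ne_of_gt hup)] at this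
  exact lt_of_le_of_lt hTyle h1lt



lemma conj_list_prod {M : Type*} [Monoid M] (u : Mˣ) (l : List M) :
    (l.map fun x => (u : M) * x * ↑u⁻¹).prod = ↑u * l.prod * ↑u⁻¹ := by
  induction l with
  | nil => simp
  | cons a l ih =>
    rw [List.map_cons, List.prod_cons, ih, List.prod_cons]
    simp only [mul_assoc, Units.inv_mul_cancel_left]

lemma diag_range_prod {n : Type*} [Fintype n] [DecidableEq n] (v : ℕ → n → ℂ) (N : ℕ) :
    ((List.range N).map fun t => Matrix.diagonal (v t)).prod =
      Matrix.diagonal (fun i => ∏ t ∈ Finset.range N, v t i) := by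
  induction N with
  | zero => simp [Matrix.diagonal_one]
  | succ k ih =>
    rw [List.range_succ, List.map_append, List.prod_append, ih]
    simp [Matrix.diagonal_mul_diagonal, Finset.prod_range_succ]

lemma spectrum_conj_diag {n : ℕ} (A : Matrix (Fin n) (Fin n) ℂ) (hA : A.IsHermitian) (γ : ℕ → ℝ) (N : ℕ) :
    spectrum ℂ (((List.range N).map fun t =>
        (1 : Matrix (Fin n) (Fin n) ℂ) - (γ t : ℂ) • A).prod) =
      Set.range (fun i => ∏ t ∈ Finset.range N, ((1 : ℂ) - (γ t : ℂ) * (hA.eigenvalues i : ℂ))) := by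
  set U : Matrix (Fin n) (Fin n) ℂ := ↑(hA.eigenvectorUnitary) with hU
  set Uu : (Matrix (Fin n) (Fin n) ℂ)ˣ :=
    ⟨U, star U, (Matrix.mem_unitaryGroup_iff).mp (hA.eigenvectorUnitary).2,
       (Matrix.mem_unitaryGroup_iff').mp (hA.eigenvectorUnitary).2⟩ with hUu
  set D : Matrix (Fin n) (Fin n) ℂ :=
    Matrix.diagonal (RCLike.ofReal ∘ hA.eigenvalues) with hD
  have hspec : A = (Uu : Matrix (Fin n) (Fin n) ℂ) * D * (↑Uu⁻¹ : Matrix (Fin n) (Fin n) ℂ) := by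
    rw [show ((Uu : Matrix (Fin n) (Fin n) ℂ)) = U from rfl,
      show ((↑Uu⁻¹ : Matrix (Fin n) (Fin n) ℂ)) = star U from rfl]
    exact hA.spectral_theorem
  have hfac : ∀ t : ℕ, (1 : Matrix (Fin n) (Fin n) ℂ) - (γ t : ℂ) • A =
      (Uu : Matrix (Fin n) (Fin n) ℂ) * ((1 : Matrix (Fin n) (Fin n) ℂ) - (γ t : ℂ) • D) * (↑Uu⁻¹ : Matrix (Fin n) (Fin n) ℂ) := by
    intro t
    rw [Matrix.mul_sub, Matrix.sub_mul, mul_one, Units.mul_inv, hspec,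
      Matrix.mul_smul, Matrix.smul_mul]
  have hmap : ((List.range N).map fun t =>
      (1 : Matrix (Fin n) (Fin n) ℂ) - (γ t : ℂ) • A) =
      ((List.range N).map fun t =>
        (1 : Matrix (Fin n) (Fin n) ℂ) - (γ t : ℂ) • D).map fun x => (Uu : Matrix (Fin n) (Fin n) ℂ) * x * (↑Uu⁻¹ : Matrix (Fin n) (Fin n) ℂ) := by
    rw [List.map_map]
    exact List.map_congr_left fun t _ => hfac t
  rw [hmap, conj_list_prod, spectrum.units_conjugate]
  have hdiag : ∀ t : ℕ, (1 : Matrix (Fin n) (Fin n) ℂ) - (γ t : ℂ) • D =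
      Matrix.diagonal (fun i => (1 : ℂ) - (γ t : ℂ) * (hA.eigenvalues i : ℂ)) := by
    intro t
    rw [hD, ← Matrix.diagonal_one, ← Matrix.diagonal_smul, ← Matrix.diagonal_sub]
    congr 1
  have : ((List.range N).map fun t =>
      (1 : Matrix (Fin n) (Fin n) ℂ) - (γ t : ℂ) • D) =
      (List.range N).map fun t =>
        Matrix.diagonal (fun i => (1 : ℂ) - (γ t : ℂ) * (hA.eigenvalues i : ℂ)) :=
    List.map_congr_left fun t _ => hdiag t
  rw [this, diag_range_prod, spectrum_diagonal]

end AuxCheb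

/-- For a Hermitian positive definite `A` with extreme eigenvalues `0 < lam1 < lamn`,
`κ = lamn/lam1` and `T ≥ 2`, the spectral radius of `∏_{t<T} (I - γ_t^{ch} A)` is
strictly smaller than `((κ-1)/(κ+1))^T`. -/
theorem specRad_chebyshev_lt_const {n : ℕ} (A : Matrix (Fin n) (Fin n) ℂ)
    (hA : A.IsHermitian) (lam1 lamn : ℝ) (hpos : 0 < lam1) (hlt : lam1 < lamn)
    (hmin : ∀ i, lam1 ≤ hA.eigenvalues i) (hmax : ∀ i, hA.eigenvalues i ≤ lamn)
    (hminex : ∃ i, hA.eigenvalues i = lam1) (hmaxex : ∃ i, hA.eigenvalues i = lamn)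
    (κ : ℝ) (hκ : κ = lamn / lam1) (T : ℕ) (hT : 2 ≤ T) :
    specRad (((List.range T).map fun t =>
        (1 : Matrix (Fin n) (Fin n) ℂ) - (chebStep lam1 lamn T t : ℂ) • A).prod) <
      ((κ - 1) / (κ + 1)) ^ T := by
  classical
  have hn : Nonempty (Fin n) := ⟨hminex.choose⟩
  have hspec := spectrum_conj_diag A hA (fun t => chebStep lam1 lamn T t) T
  rw [specRad, hspec]
  set w : Fin n → ℂ := fun i => ∏ t ∈ Finset.range T,
    ((1:ℂ) - (chebStep lam1 lamn T t : ℂ) * (hA.eigenvalues i : ℂ)) with hw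
  have hfin : ((fun z => ‖z‖) '' Set.range w).Finite :=
    (Set.finite_range w).image _
  have hne : ((fun z => ‖z‖) '' Set.range w).Nonempty :=
    (Set.range_nonempty w).image _
  rw [Set.Finite.csSup_lt_iff hfin hne]
  rintro x ⟨z, ⟨i, rfl⟩, rfl⟩
  have hreal : w i =
      ((∏ t ∈ Finset.range T, (1 - chebStep lam1 lamn T t * hA.eigenvalues i) : ℝ) : ℂ) := by
    rw [hw, Complex.ofReal_prod]
    apply Finset.prod_congr rfl
    intro t _
    push_cast
    ring
  simp only [hreal, Complex.norm_real, Real.norm_eq_abs]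
  have hkey := scalar_key lam1 lamn hpos hlt T hT (hA.eigenvalues i) (hmin i) (hmax i)
  have hbound : (lamn - lam1)/(lam1 + lamn) = (κ - 1)/(κ + 1) := by
    subst hκ
    have h1 : lam1 ≠ 0 := ne_of_gt hpos
    have h2 : (0:ℝ) < lam1 + lamn := by linarith
    have h3 : (0:ℝ) < lamn / lam1 + 1 := by
      have := div_pos (lt_trans hpos hlt) hpos
      linarith
    rw [div_eq_div_iff h2.ne' h3.ne']
    field_simp
    try ring
    try tauto
  rw [← hbound]
  exact hkey
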